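/- arXiv:math/0002145 — 4 statements merged into one kernel-verified Lean document; each statement's English description precedes it below -/
import Mathlib

section
/- Let (X,ν) be a standard Borel probability space, f: X → X an invertible measure-preserving ergodic transformation, M a compact metric space, and φ: X → Homeo(M) measurable; let F(x,p) = (f(x), φ_x(p)) be the skew product on X×M, and let μ be an F-invariant ergodic Borel probability measure on X×M whose projection to X is ν, with fiberwise disintegration {μ_x}. Assume that for ν-a.e. x, (φ_x)_*μ_x = μ_{f(x)}. Suppose there exist a measurable set Λ ⊆ X×M and constants R > 0, C > 0, 0 < c < 1 such that: (i) μ(Λ) > 1/2; (ii) for every (x,p) ∈ Λ, μ_x(Λ_x) > 1/2, where Λ_x = {q ∈ M : (x,q) ∈ Λ}; (iii) for every (x,p) ∈ Λ, every q ∈ M with d(p,q) ≤ R, and every m ≥ 0, one has d(φ_x^{(m)}(p), φ_x^{(m)}(q)) ≤ C c^m d(p,q). Then there exist a measurable set S ⊆ X×M and an integer k ≥ 1 such that μ(S) = 1 and for every (x,p) ∈ S, the set S ∩ ({x}×M) has exactly k elements. -/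
/-!
The family `μx` need not be measurable in `x`, so replace it by the conditional kernel `κ` of `μ`:
both disintegrate `μ`, hence they agree `ν`-a.e. and `κ` inherits the equivariance
`(φ x)_* κ x = κ (f x)`. The mass `κ x {p}` of the point `(x, p)` in its fiber is then invariant
under the skew product, so by ergodicity it is `μ`-a.e. equal to a constant `a`.

Contraction produces atoms. By pigeonhole over a cover by `R / 2`-balls, a fixed share of the mass
of `Λ_x` lies in one such ball; `φ_x^{(m)}` maps it into a ball of radius `C c^m R`, which
therefore carries that share of `κ (f^m x)`. As `f` preserves `ν`, a set of fibers of positive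
measure has heavy balls at every scale, and compactness turns these into atoms. Hence `a > 0`,
almost every fiber consists of exactly `1 / a` atoms of mass `a`, and these atoms form `S`.
-/

open MeasureTheory Set

/-- Iterated fiber maps of the skew product `F(x,p) = (f x, φ x p)`:
`φ^{(0)}_x = id` and `φ^{(m+1)}_x = φ_{f^m x} ∘ φ^{(m)}_x`. -/
def fiberIter {X M : Type*} (f : X → X) (φ : X → M → M) : ℕ → X → M → M
  | 0, _, p => p
  | m + 1, x, p => φ (f^[m] x) (fiberIter f φ m x p)

open ProbabilityTheory Metric Filter
open scoped ENNReal Topology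

theorem MeasurableSpace.exists_countable_isPiSystem_generateFrom (α : Type*)
    [m : MeasurableSpace α] [CountablyGenerated α] :
    ∃ C : Set (Set α), C.Countable ∧ IsPiSystem C ∧ generateFrom C = m := by
  refine ⟨sInter '' {F | F.Finite ∧ F ⊆ countableGeneratingSet α}, ?_, ?_, le_antisymm ?_ ?_⟩
  · exact (countable_ofPred_finite_subset countable_countableGeneratingSet).image _
  · rintro _ ⟨F, ⟨hF, hFC⟩, rfl⟩ _ ⟨G, ⟨hG, hGC⟩, rfl⟩ -
    exact ⟨F ∪ G, ⟨hF.union hG, union_subset hFC hGC⟩, sInter_union F G⟩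
  · refine generateFrom_le ?_
    rintro _ ⟨F, ⟨hF, hFC⟩, rfl⟩
    exact .sInter hF.countable fun s hs => measurableSet_countableGeneratingSet (hFC hs)
  · conv_lhs => rw [← generateFrom_countableGeneratingSet (α := α)]
    exact generateFrom_mono fun s hs =>
      ⟨{s}, ⟨finite_singleton s, singleton_subset_iff.2 hs⟩, sInter_singleton s⟩

section Disintegration

variable {X M : Type*} [MeasurableSpace X] [MeasurableSpace M] {ν : Measure X}

theorem ae_eq_of_forall_ae_apply_eq [MeasurableSpace.CountablyGenerated M]
    {ρ₁ ρ₂ : X → Measure M} [∀ x, IsFiniteMeasure (ρ₁ x)]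
    (h : ∀ U, MeasurableSet U → ∀ᵐ x ∂ν, ρ₁ x U = ρ₂ x U) : ∀ᵐ x ∂ν, ρ₁ x = ρ₂ x := by
  obtain ⟨C, hCc, hCpi, hCgen⟩ := MeasurableSpace.exists_countable_isPiSystem_generateFrom M
  have hC : ∀ U ∈ C, MeasurableSet U := fun U hU => hCgen ▸ .basic U hU
  filter_upwards [(ae_ball_iff hCc).2 fun U hU => h U (hC U hU), h univ .univ] with x hx hx_univ
  exact ext_of_generate_finite C hCgen.symm hCpi hx hx_univ

theorem ae_le_of_forall_setLIntegral_eq [SigmaFinite ν] {g h : X → ℝ≥0∞} (hh : Measurable h)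
    (hh_fin : ∫⁻ x, h x ∂ν ≠ ∞)
    (hgh : ∀ A, MeasurableSet A → ∫⁻ x in A, g x ∂ν = ∫⁻ x in A, h x ∂ν) : h ≤ᵐ[ν] g := by
  obtain ⟨m, hm, hmg, hm_int⟩ := exists_measurable_le_lintegral_eq ν g
  have hmh : m ≤ᵐ[ν] h := ae_le_of_forall_setLIntegral_le_of_sigmaFinite hm fun A hA _ =>
    (lintegral_mono fun x => hmg x).trans (hgh A hA).le
  have hhm : ∫⁻ x, h x ∂ν ≤ ∫⁻ x, m x ∂ν := by
    rw [← hm_int, ← setLIntegral_univ, ← hgh univ .univ, setLIntegral_univ]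
  filter_upwards [ae_eq_of_ae_le_of_lintegral_le hmh
    ((lintegral_mono_ae hmh).trans_lt hh_fin.lt_top).ne hh.aemeasurable hhm] with x hx
  exact hx ▸ hmg x

theorem setLIntegral_measure_prodMk_preimage (ρ : X → Measure M) {A : Set X}
    (hA : MeasurableSet A) (E : Set (X × M)) :
    ∫⁻ x in A, ρ x (Prod.mk x ⁻¹' E) ∂ν = ∫⁻ x, ρ x (Prod.mk x ⁻¹' (E ∩ A ×ˢ univ)) ∂ν := by
  rw [← lintegral_indicator hA]
  refine lintegral_congr fun x => ?_
  by_cases hx : x ∈ A <;> simp [hx]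

theorem ae_measure_prodMk_preimage_eq [IsFiniteMeasure ν] (κ : Kernel X M) [IsMarkovKernel κ]
    (ρ : X → Measure M) [∀ x, IsProbabilityMeasure (ρ x)]
    (hρ : ∀ E, MeasurableSet E → (ν ⊗ₘ κ) E = ∫⁻ x, ρ x (Prod.mk x ⁻¹' E) ∂ν)
    {E : Set (X × M)} (hE : MeasurableSet E) :
    ∀ᵐ x ∂ν, ρ x (Prod.mk x ⁻¹' E) = κ x (Prod.mk x ⁻¹' E) := by
  have hle : ∀ E, MeasurableSet E →
      ∀ᵐ x ∂ν, κ x (Prod.mk x ⁻¹' E) ≤ ρ x (Prod.mk x ⁻¹' E) := by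
    intro E hE
    refine ae_le_of_forall_setLIntegral_eq (Kernel.measurable_kernel_prodMk_left hE) ?_
      fun A hA => ?_
    · rw [← Measure.compProd_apply hE]
      exact measure_ne_top _ _
    · have hEA := hE.inter (hA.prod MeasurableSet.univ)
      rw [setLIntegral_measure_prodMk_preimage _ hA, setLIntegral_measure_prodMk_preimage _ hA,
        ← hρ _ hEA, Measure.compProd_apply hEA]
  filter_upwards [hle E hE, hle Eᶜ hE.compl] with x h h_compl
  have hE_x : MeasurableSet (Prod.mk x ⁻¹' E) := measurable_prodMk_left hE
  rw [preimage_compl, prob_compl_eq_one_sub hE_x, prob_compl_eq_one_sub hE_x,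
    ENNReal.sub_le_sub_iff_left prob_le_one ENNReal.one_ne_top] at h_compl
  exact le_antisymm h_compl h

theorem ae_eq_of_compProd_apply_eq_lintegral [IsFiniteMeasure ν]
    [MeasurableSpace.CountablyGenerated M] (κ : Kernel X M) [IsMarkovKernel κ]
    (ρ : X → Measure M) [∀ x, IsProbabilityMeasure (ρ x)]
    (hρ : ∀ E, MeasurableSet E → (ν ⊗ₘ κ) E = ∫⁻ x, ρ x (Prod.mk x ⁻¹' E) ∂ν) :
    ∀ᵐ x ∂ν, ρ x = κ x :=
  ae_eq_of_forall_ae_apply_eq fun U hU => by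
    simpa using ae_measure_prodMk_preimage_eq κ ρ hρ (MeasurableSet.univ.prod hU)

theorem frequently_measure_prodMk_preimage_ne_zero [SFinite ν] (κ : Kernel X M)
    [IsSFiniteKernel κ] {Λ : Set (X × M)} (hΛ : MeasurableSet Λ) (h : (ν ⊗ₘ κ) Λ ≠ 0) :
    ∃ᵐ x ∂ν, κ x (Prod.mk x ⁻¹' Λ) ≠ 0 := by
  rw [Measure.compProd_apply hΛ] at h
  exact fun h_ae => h <| (lintegral_congr_ae (h_ae.mono fun x hx => not_not.1 hx)).trans
    lintegral_zero

end Disintegration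

theorem measurable_fiberIter {X M : Type*} [MeasurableSpace M] {f : X → X} {φ : X → M → M}
    (hφ : ∀ x, Measurable (φ x)) (m : ℕ) (x : X) : Measurable (fiberIter f φ m x) := by
  induction m with
  | zero => exact measurable_id
  | succ m ih => exact (hφ _).comp ih

section SkewProduct

variable {X M : Type*} [MeasurableSpace X] [MeasurableSpace M] {ν : Measure X}
  {f : X → X} {φ : X → M → M}

theorem ae_map_fiberIter_eq (hf : Measure.QuasiMeasurePreserving f ν ν) (ρ : X → Measure M)
    (hφ : ∀ x, Measurable (φ x)) (h : ∀ᵐ x ∂ν, (ρ x).map (φ x) = ρ (f x)) :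
    ∀ᵐ x ∂ν, ∀ m, (ρ x).map (fiberIter f φ m x) = ρ (f^[m] x) := by
  have h_iter : ∀ᵐ x ∂ν, ∀ n, (ρ (f^[n] x)).map (φ (f^[n] x)) = ρ (f (f^[n] x)) :=
    ae_all_iff.2 fun n => (hf.iterate n).ae h
  filter_upwards [h_iter] with x hx m
  induction m with
  | zero => exact Measure.map_id
  | succ m ih =>
    change (ρ x).map (φ (f^[m] x) ∘ fiberIter f φ m x) = _
    rw [← Measure.map_map (hφ _) (measurable_fiberIter hφ m x), ih, hx m,
      Function.iterate_succ_apply']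

theorem measurable_kernel_singleton [MeasurableEq M] (κ : Kernel X M) [IsSFiniteKernel κ] :
    Measurable fun z : X × M => κ z.1 {z.2} := by
  have h_diag : MeasurableSet {w : (X × M) × M | w.2 = w.1.2} :=
    measurableSet_diagonal.preimage (measurable_snd.prodMk (measurable_snd.comp measurable_fst))
  exact Kernel.measurable_kernel_prodMk_left (κ := κ.comap Prod.fst measurable_fst) h_diag

theorem Ergodic.exists_ae_kernel_singleton_eq [MeasurableEq M] {μ : Measure (X × M)}
    (hF : Ergodic (fun z : X × M => (f z.1, φ z.1 z.2)) μ) (hμ : μ.map Prod.fst = ν)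
    (κ : Kernel X M) [IsSFiniteKernel κ] (hφ : ∀ x, Measurable (φ x))
    (hφ_inj : ∀ x, Function.Injective (φ x)) (hκ : ∀ᵐ x ∂ν, (κ x).map (φ x) = κ (f x)) :
    ∃ a, ∀ᵐ z ∂μ, κ z.1 {z.2} = a := by
  have hκ_μ : ∀ᵐ z ∂μ, (κ z.1).map (φ z.1) = κ (f z.1) :=
    ae_of_ae_map measurable_fst.aemeasurable (hμ ▸ hκ)
  refine hF.ae_eq_const_of_ae_eq_comp₀ (measurable_kernel_singleton κ).nullMeasurable ?_
  filter_upwards [hκ_μ] with z hz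
  change κ (f z.1) {φ z.1 z.2} = κ z.1 {z.2}
  rw [← hz, Measure.map_apply (hφ _) (measurableSet_singleton _), ← image_singleton,
    (hφ_inj _).preimage_image]

end SkewProduct

theorem exists_measure_le_card_mul_measure_inter {M ι : Type*} [MeasurableSpace M]
    (ρ : Measure M) {t : Finset ι} (ht : t.Nonempty) {U : ι → Set M} {s : Set M}
    (hs : s ⊆ ⋃ i ∈ t, U i) :
    ∃ i ∈ t, ρ s ≤ t.card * ρ (s ∩ U i) := by
  obtain ⟨i, hi, hmax⟩ := t.exists_max_image (fun i => ρ (s ∩ U i)) ht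
  refine ⟨i, hi, ?_⟩
  calc ρ s ≤ ρ (⋃ j ∈ t, s ∩ U j) := by
        rw [← inter_iUnion₂]
        exact measure_mono (subset_inter subset_rfl hs)
    _ ≤ ∑ j ∈ t, ρ (s ∩ U j) := measure_biUnion_finset_le t _
    _ ≤ t.card * ρ (s ∩ U i) := by simpa using Finset.sum_le_card_nsmul t _ _ hmax

section Balls

variable {M : Type*} [MetricSpace M] [MeasurableSpace M] [OpensMeasurableSpace M]

theorem exists_measure_le_card_mul_map_closedBall [Nonempty M] (ρ : Measure M) {t : Finset M}
    {R K : ℝ} (ht : univ ⊆ ⋃ p ∈ t, ball p (R / 2)) (hK : 0 ≤ K) {g : M → M} (hg : Measurable g)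
    {s : Set M} (hgs : ∀ q₀ ∈ s, ∀ q, dist q₀ q ≤ R → dist (g q₀) (g q) ≤ K * dist q₀ q) :
    ∃ p, ρ s ≤ t.card * ρ.map g (closedBall p (K * R)) := by
  have ht_ne : t.Nonempty := by
    obtain ⟨p, hp, -⟩ := mem_iUnion₂.1 (ht (mem_univ (Classical.arbitrary M)))
    exact ⟨p, hp⟩
  obtain ⟨p₀, -, hp₀⟩ :=
    exists_measure_le_card_mul_measure_inter ρ ht_ne ((subset_univ s).trans ht)
  rcases (s ∩ ball p₀ (R / 2)).eq_empty_or_nonempty with h_empty | ⟨q₀, hq₀s, hq₀⟩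
  · exact ⟨p₀, hp₀.trans (by simp [h_empty])⟩
  refine ⟨g q₀, hp₀.trans ?_⟩
  rw [Measure.map_apply hg measurableSet_closedBall]
  gcongr
  rintro q ⟨-, hq⟩
  have h_dist : dist q₀ q ≤ R := by
    linarith [dist_triangle_right q₀ q p₀, mem_ball.1 hq, mem_ball.1 hq₀]
  rw [mem_preimage, mem_closedBall, dist_comm]
  exact (hgs q₀ hq₀s q h_dist).trans (mul_le_mul_of_nonneg_left h_dist hK)

theorem exists_le_measure_singleton_of_tendsto [CompactSpace M] (ρ : Measure M)
    [IsFiniteMeasure ρ] {d : ℕ → M} {r : ℕ → ℝ} (hr : Tendsto r atTop (𝓝 0)) {δ : ℝ≥0∞}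
    (hδ : ∀ n, δ ≤ ρ (closedBall (d n) (r n))) : ∃ q, δ ≤ ρ {q} := by
  obtain ⟨q, -, σ, hσ, hdq⟩ := isCompact_univ.tendsto_subseq fun n => mem_univ (d n)
  have h_ball : ∀ ε > 0, δ ≤ ρ (closedBall q ε) := by
    intro ε hε
    obtain ⟨n, hn_d, hn_r⟩ := ((tendsto_order.1 (tendsto_iff_dist_tendsto_zero.1 hdq)).2
      (ε / 2) (half_pos hε) |>.and
      ((tendsto_order.1 (hr.comp hσ.tendsto_atTop)).2 (ε / 2) (half_pos hε))).exists
    refine (hδ (σ n)).trans (measure_mono (closedBall_subset_closedBall' ?_))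
    simp only [Function.comp_apply] at hn_d hn_r
    linarith
  have h_lim : Tendsto (fun ε => ρ (cthickening ε {q})) (𝓝[>] 0) (𝓝 (ρ {q})) :=
    (tendsto_measure_cthickening_of_isClosed ⟨1, one_pos, measure_ne_top ρ _⟩
      isClosed_singleton).mono_left nhdsWithin_le_nhds
  refine ⟨q, ge_of_tendsto h_lim ?_⟩
  filter_upwards [self_mem_nhdsWithin] with ε (hε : 0 < ε)
  rw [cthickening_singleton q hε.le]
  exact h_ball ε hε

end Balls

theorem Filter.Frequently.exists_inv_nat_lt {α : Type*} {l : Filter α} [CountableInterFilter l]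
    {g : α → ℝ≥0∞} (h : ∃ᶠ x in l, g x ≠ 0) : ∃ n : ℕ, ∃ᶠ x in l, (n : ℝ≥0∞)⁻¹ < g x := by
  by_contra! h_le
  obtain ⟨x, hx, hx_le⟩ := (h.and_eventually (eventually_countable_forall.2 h_le)).exists
  obtain ⟨n, hn⟩ := ENNReal.exists_inv_nat_lt hx
  exact (hx_le n).not_gt hn

section Contraction

variable {X M : Type*} [MeasurableSpace X] [MetricSpace M] [CompactSpace M] [MeasurableSpace M]
  [OpensMeasurableSpace M] {ν : Measure X} {f : X → X} {φ : X → M → M}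

theorem MeasureTheory.MeasurePreserving.measure_iInter_ne_zero_of_subset_preimage_iterate
    [IsFiniteMeasure ν] (hf : MeasurePreserving f ν ν) {H : ℕ → Set X}
    (hH : ∀ m, MeasurableSet (H m)) (hH_anti : Antitone H) {G : Set X} (hG : ν G ≠ 0)
    (hGH : ∀ m, G ⊆ f^[m] ⁻¹' H m) : ν (⋂ m, H m) ≠ 0 := by
  rw [hH_anti.measure_iInter (fun m => (hH m).nullMeasurableSet) ⟨0, measure_ne_top _ _⟩]
  refine ne_bot_of_le_ne_bot hG (le_iInf fun m => ?_)
  exact (measure_mono (hGH m)).trans_eq ((hf.iterate m).measure_preimage (hH m).nullMeasurableSet)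

theorem frequently_exists_kernel_singleton_ne_zero [Nonempty M] [IsFiniteMeasure ν]
    (hf : MeasurePreserving f ν ν) (κ : Kernel X M) [IsFiniteKernel κ]
    (hφ : ∀ x, Measurable (φ x)) (hκ : ∀ᵐ x ∂ν, (κ x).map (φ x) = κ (f x))
    {Λ : Set (X × M)} (hΛ : ∃ᵐ x ∂ν, κ x (Prod.mk x ⁻¹' Λ) ≠ 0)
    {R C c : ℝ} (hR : 0 < R) (hC : 0 < C) (hc0 : 0 < c) (hc1 : c < 1)
    (hcontr : ∀ z ∈ Λ, ∀ q : M, dist z.2 q ≤ R → ∀ m : ℕ,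
      dist (fiberIter f φ m z.1 z.2) (fiberIter f φ m z.1 q) ≤ C * c ^ m * dist z.2 q) :
    ∃ᵐ x ∂ν, ∃ q, κ x {q} ≠ 0 := by
  obtain ⟨n, hn⟩ := hΛ.exists_inv_nat_lt
  obtain ⟨t, ht⟩ := isCompact_univ.elim_finite_subcover (fun p : M => ball p (R / 2))
    (fun _ => isOpen_ball) fun q _ => mem_iUnion.2 ⟨q, mem_ball_self (half_pos hR)⟩
  set δ : ℝ≥0∞ := (n : ℝ≥0∞)⁻¹ / t.card
  have hδ : δ ≠ 0 := ENNReal.div_ne_zero.2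
    ⟨ENNReal.inv_ne_zero.2 (ENNReal.natCast_ne_top n), ENNReal.natCast_ne_top _⟩
  set r : ℕ → ℝ := fun m => 2 * (C * c ^ m * R)
  have hr_anti : Antitone r := fun m m' hmm' => by
    have := pow_le_pow_of_le_one hc0.le hc1.le hmm'
    dsimp only [r]
    gcongr
  have hr : Tendsto r atTop (𝓝 0) := by
    simpa [r] using
      (((tendsto_pow_atTop_nhds_zero_of_lt_one hc0.le hc1).const_mul C).mul_const R).const_mul 2
  obtain ⟨D, hDc, hD⟩ := TopologicalSpace.exists_countable_dense M
  -- Centres from a countable dense set keep `H m` measurable; doubling the radius of the balls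
  -- absorbs the approximation of the actual centres.
  set H : ℕ → Set X := fun m => ⋃ d ∈ D, {y | δ ≤ κ y (closedBall d (r m))}
  have hH : ∀ m, MeasurableSet (H m) := fun m => .biUnion hDc fun d _ =>
    measurableSet_le measurable_const (κ.measurable_coe measurableSet_closedBall)
  have hH_anti : Antitone H := fun m m' hmm' => iUnion₂_mono fun d _ y hy =>
    hy.trans (measure_mono (closedBall_subset_closedBall (hr_anti hmm')))
  set G := {x | (n : ℝ≥0∞)⁻¹ < κ x (Prod.mk x ⁻¹' Λ) ∧
    ∀ m, (κ x).map (fiberIter f φ m x) = κ (f^[m] x)}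
  have hG : ν G ≠ 0 :=
    frequently_ae_iff.1 (hn.and_eventually (ae_map_fiberIter_eq hf.quasiMeasurePreserving κ hφ hκ))
  have hGH : ∀ m, G ⊆ f^[m] ⁻¹' H m := by
    rintro m x ⟨hxΛ, hx_iter⟩
    obtain ⟨p, hp⟩ := exists_measure_le_card_mul_map_closedBall (κ x) ht (by positivity)
      (measurable_fiberIter hφ m x) fun q₀ hq₀ q hq => hcontr (x, q₀) hq₀ q hq m
    obtain ⟨d, hdD, hpd⟩ := hD.exists_dist_lt p (by positivity : 0 < C * c ^ m * R)
    rw [hx_iter m] at hp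
    refine mem_iUnion₂.2 ⟨d, hdD, ?_⟩
    calc δ ≤ κ (f^[m] x) (closedBall p (C * c ^ m * R)) :=
          ENNReal.div_le_of_le_mul' (hxΛ.le.trans hp)
      _ ≤ κ (f^[m] x) (closedBall d (r m)) :=
          measure_mono (closedBall_subset_closedBall' (by dsimp only [r]; linarith))
  refine frequently_ae_iff.2 <| ne_bot_of_le_ne_bot
    (hf.measure_iInter_ne_zero_of_subset_preimage_iterate hH hH_anti hG hGH)
    (measure_mono fun y hy => ?_)
  choose d _ hd using fun m => mem_iUnion₂.1 (mem_iInter.1 hy m)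
  obtain ⟨q, hq⟩ := exists_le_measure_singleton_of_tendsto (κ y) hr hd
  exact ⟨q, (hδ.bot_lt.trans_le hq).ne'⟩

end Contraction

section FiberCounting

variable {X M : Type*} [MeasurableSpace X] [MeasurableSpace M] {ν : Measure X}

theorem exists_encard_eq_of_measure_singleton_eq [MeasurableSingletonClass M] (ρ : Measure M)
    [IsFiniteMeasure ρ] {A : Set M} {a : ℝ≥0∞} (ha : a ≠ 0) (hA : ρ A = 1)
    (hAa : ∀ q ∈ A, ρ {q} = a) : ∃ n : ℕ, A.encard = n ∧ a = (n : ℝ≥0∞)⁻¹ := by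
  have hA_fin : A.Finite :=
    (ρ.finite_const_le_meas_of_disjoint_iUnion (pos_iff_ne_zero.2 ha)
      (fun q => measurableSet_singleton q) (pairwise_disjoint_fiber id)
      (measure_ne_top ρ _)).subset fun q hq => (hAa q hq).ge
  refine ⟨hA_fin.toFinset.card, hA_fin.encard_eq_coe_toFinset_card, ?_⟩
  refine ENNReal.eq_inv_of_mul_eq_one_left ?_
  calc a * hA_fin.toFinset.card = ∑ q ∈ hA_fin.toFinset, ρ {q} := by
        rw [Finset.sum_congr rfl fun q hq => hAa q (hA_fin.mem_toFinset.1 hq), Finset.sum_const,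
          nsmul_eq_mul, mul_comm]
    _ = 1 := by rw [sum_measure_singleton, hA_fin.coe_toFinset, hA]

theorem ne_zero_of_ae_kernel_singleton_eq [SFinite ν] [MeasurableEq M] (κ : Kernel X M)
    [IsSFiniteKernel κ] {a : ℝ≥0∞} (ha : ∀ᵐ z ∂(ν ⊗ₘ κ), κ z.1 {z.2} = a)
    (h_atom : ∃ᵐ x ∂ν, ∃ q, κ x {q} ≠ 0) : a ≠ 0 := by
  rintro rfl
  obtain ⟨x, ⟨q, hq⟩, hx⟩ := (h_atom.and_eventually (Measure.ae_ae_of_ae_compProd ha)).exists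
  exact hq (measure_mono_null (singleton_subset_iff.2 hq) (ae_iff.1 hx))

theorem exists_measure_eq_one_encard_fiber_eq [IsProbabilityMeasure ν] [MeasurableEq M]
    (κ : Kernel X M) [IsMarkovKernel κ] {a : ℝ≥0∞} (ha0 : a ≠ 0)
    (ha : ∀ᵐ z ∂(ν ⊗ₘ κ), κ z.1 {z.2} = a) :
    ∃ (S : Set (X × M)) (k : ℕ), MeasurableSet S ∧ 1 ≤ k ∧ (ν ⊗ₘ κ) S = 1 ∧
      ∀ z ∈ S, {q : M | (z.1, q) ∈ S}.encard = k := by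
  set W := {z : X × M | κ z.1 {z.2} = a}
  have hW : MeasurableSet W := measurable_kernel_singleton κ (measurableSet_singleton a)
  set S := W ∩ {z | κ z.1 (Prod.mk z.1 ⁻¹' W) = 1}
  have hS : MeasurableSet S := hW.inter <|
    (Kernel.measurable_kernel_prodMk_left hW).comp measurable_fst (measurableSet_singleton 1)
  have hW_fiber : ∀ᵐ x ∂ν, κ x (Prod.mk x ⁻¹' W) = 1 := by
    filter_upwards [Measure.ae_ae_of_ae_compProd ha] with x hx
    exact ((ae_iff_measure_eq (p := fun q => (x, q) ∈ W)
      (measurable_prodMk_left hW).nullMeasurableSet).1 hx).trans measure_univ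
  have hS_ae : ∀ᵐ z ∂(ν ⊗ₘ κ), z ∈ S := by
    have := ae_of_ae_map measurable_fst.aemeasurable ((Measure.fst_compProd ν κ).symm ▸ hW_fiber)
    filter_upwards [ha, this] with z hz hz' using ⟨hz, hz'⟩
  have hμS : (ν ⊗ₘ κ) S = 1 := by
    rw [← measure_univ (μ := ν ⊗ₘ κ)]
    exact (ae_iff_measure_eq hS.nullMeasurableSet).1 hS_ae
  have h_fiber : ∀ z ∈ S, ∃ n : ℕ, {q : M | (z.1, q) ∈ S}.encard = n ∧ a = (n : ℝ≥0∞)⁻¹ := by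
    rintro z ⟨-, hz⟩
    have h_eq : {q : M | (z.1, q) ∈ S} = Prod.mk z.1 ⁻¹' W := by
      ext q
      exact and_iff_left hz
    rw [h_eq]
    exact exists_encard_eq_of_measure_singleton_eq (κ z.1) ha0 hz fun q hq => hq
  obtain ⟨z₀, hz₀⟩ := hS_ae.exists
  obtain ⟨k, hk, hak⟩ := h_fiber z₀ hz₀
  refine ⟨S, k, hS, ?_, hμS, fun z hz => ?_⟩
  · have h_ne : {q : M | (z₀.1, q) ∈ S}.Nonempty := ⟨z₀.2, hz₀⟩
    exact_mod_cast hk ▸ Set.one_le_encard_iff_nonempty.2 h_ne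
  · obtain ⟨n, hn, han⟩ := h_fiber z hz
    rw [hn, Nat.cast_inj.1 (inv_inj.1 (han.symm.trans hak))]

end FiberCounting

theorem theoremII_contraction_general
    {X : Type*} [MeasurableSpace X]
    (ν : Measure X) [IsProbabilityMeasure ν]
    (f : X → X) (hf : MeasurePreserving f ν ν)
    {M : Type*} [MetricSpace M] [CompactSpace M] [MeasurableSpace M] [BorelSpace M]
    (φ : X → M → M)
    (hφbij : ∀ x, Function.Bijective (φ x))
    (hφmeas : Measurable fun z : X × M => φ z.1 z.2)
    (μ : Measure (X × M)) [IsProbabilityMeasure μ]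
    (hFerg : Ergodic (fun z : X × M => (f z.1, φ z.1 z.2)) μ)
    (hproj : μ.map Prod.fst = ν)
    (μx : X → Measure M) (hμxprob : ∀ x, IsProbabilityMeasure (μx x))
    (hdisint : ∀ E : Set (X × M), MeasurableSet E →
      μ E = ∫⁻ x, μx x {p | (x, p) ∈ E} ∂ν)
    (hequiv : ∀ᵐ x ∂ν, (μx x).map (φ x) = μx (f x))
    (Λ : Set (X × M)) (hΛmeas : MeasurableSet Λ)
    (R C c : ℝ) (hR : 0 < R) (hC : 0 < C) (hc0 : 0 < c) (hc1 : c < 1)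
    (hΛμ : 1 / 2 < μ Λ)
    (hcontr : ∀ z ∈ Λ, ∀ q : M, dist z.2 q ≤ R → ∀ m : ℕ,
      dist (fiberIter f φ m z.1 z.2) (fiberIter f φ m z.1 q) ≤ C * c ^ m * dist z.2 q) :
    ∃ (S : Set (X × M)) (k : ℕ), MeasurableSet S ∧ 1 ≤ k ∧ μ S = 1 ∧
      ∀ z ∈ S, {q : M | (z.1, q) ∈ S}.encard = k := by
  have : Nonempty M := (Measure.nonempty_of_neZero μ).map Prod.snd
  have := hμxprob
  set κ := μ.condKernel
  have hμ : ν ⊗ₘ κ = μ := hproj ▸ μ.disintegrate κ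
  have hφ : ∀ x, Measurable (φ x) := fun x => hφmeas.comp measurable_prodMk_left
  have hμx : ∀ᵐ x ∂ν, μx x = κ x :=
    ae_eq_of_compProd_apply_eq_lintegral κ μx fun E hE => hμ ▸ hdisint E hE
  have hκ : ∀ᵐ x ∂ν, (κ x).map (φ x) = κ (f x) := by
    filter_upwards [hμx, hf.quasiMeasurePreserving.ae hμx, hequiv] with x hx hfx h
    rw [← hx, ← hfx, h]
  obtain ⟨a, ha⟩ :=
    hFerg.exists_ae_kernel_singleton_eq hproj κ hφ (fun x => (hφbij x).injective) hκ
  have hΛ : ∃ᵐ x ∂ν, κ x (Prod.mk x ⁻¹' Λ) ≠ 0 :=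
    frequently_measure_prodMk_preimage_ne_zero κ hΛmeas <| by
      rw [hμ]
      exact (zero_le.trans_lt hΛμ).ne'
  have h_atom := frequently_exists_kernel_singleton_ne_zero hf κ hφ hκ hΛ hR hC hc0 hc1 hcontr
  rw [← hμ] at ha ⊢
  exact exists_measure_eq_one_encard_fiber_eq κ (ne_zero_of_ae_kernel_singleton_eq κ ha h_atom) ha

/-- **Theorem II (contraction-hypothesis form).** For a skew product over an invertible
ergodic base with an invariant ergodic measure whose fiber maps contract exponentially on a
set of measure `> 1/2` (with fiberwise measure `> 1/2` as well), there is a full-measure set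
meeting a.e. fiber in exactly `k` points. -/
theorem theoremII_contraction
    {X : Type*} [MeasurableSpace X] [StandardBorelSpace X]
    (ν : Measure X) [IsProbabilityMeasure ν]
    (f : X → X) (hf : MeasurePreserving f ν ν) (hfbij : Function.Bijective f)
    (hferg : Ergodic f ν)
    {M : Type*} [MetricSpace M] [CompactSpace M] [MeasurableSpace M] [BorelSpace M]
    (φ : X → M → M)
    (hφcont : ∀ x, Continuous (φ x)) (hφbij : ∀ x, Function.Bijective (φ x))
    (hφmeas : Measurable fun z : X × M => φ z.1 z.2)
    (μ : Measure (X × M)) [IsProbabilityMeasure μ]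
    (hFinv : MeasurePreserving (fun z : X × M => (f z.1, φ z.1 z.2)) μ μ)
    (hFerg : Ergodic (fun z : X × M => (f z.1, φ z.1 z.2)) μ)
    (hproj : μ.map Prod.fst = ν)
    (μx : X → Measure M) (hμxprob : ∀ x, IsProbabilityMeasure (μx x))
    (hdisint : ∀ E : Set (X × M), MeasurableSet E →
      μ E = ∫⁻ x, μx x {p | (x, p) ∈ E} ∂ν)
    (hequiv : ∀ᵐ x ∂ν, (μx x).map (φ x) = μx (f x))
    (Λ : Set (X × M)) (hΛmeas : MeasurableSet Λ)
    (R C c : ℝ) (hR : 0 < R) (hC : 0 < C) (hc0 : 0 < c) (hc1 : c < 1)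
    (hΛμ : 1 / 2 < μ Λ)
    (hΛfib : ∀ z ∈ Λ, 1 / 2 < μx z.1 {q : M | (z.1, q) ∈ Λ})
    (hcontr : ∀ z ∈ Λ, ∀ q : M, dist z.2 q ≤ R → ∀ m : ℕ,
      dist (fiberIter f φ m z.1 z.2) (fiberIter f φ m z.1 q) ≤ C * c ^ m * dist z.2 q) :
    ∃ (S : Set (X × M)) (k : ℕ), MeasurableSet S ∧ 1 ≤ k ∧ μ S = 1 ∧
      ∀ z ∈ S, {q : M | (z.1, q) ∈ S}.encard = k :=
  theoremII_contraction_general ν f hf φ hφbij hφmeas μ hFerg hproj μx hμxprob hdisint hequiv Λ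
    hΛmeas R C c hR hC hc0 hc1 hΛμ hcontr
end

section
/- Let M be a compact metric space, f: M → M a homeomorphism, and μ an f-invariant ergodic Borel probability measure on M. Suppose there exist a measurable set Λ ⊆ M and constants R > 0, C > 0, 0 < c < 1 such that μ(Λ) > 1/2 and, for every p ∈ Λ, every q ∈ M with d(p,q) ≤ R, and every m ≥ 0, one has d(f^m(p), f^m(q)) ≤ C c^m d(p,q). Then μ is concentrated on a single periodic orbit: there exist a point p ∈ M and an integer n ≥ 1 with f^n(p) = p, such that the orbit P = {p, f(p), …, f^{n-1}(p)} satisfies μ(P) = 1 and μ({f^i(p)}) = 1/n for each i. -/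
open MeasureTheory Set
open scoped ENNReal

/-!
A piece `s = Λ ∩ ball z (R / 2)` has positive measure, and by Poincaré recurrence some `p ∈ s`
returns to `s` at a time `n ≥ 1`. The contraction estimate at `p` makes `k ↦ f^[n * k] p` Cauchy;
its limit `x` is an `n`-periodic point which attracts, under `f^[n]`, every point `R`-close to `p`,
in particular all of `s`. A measure-preserving map puts on an attracting fixed point at least the
mass of its basin, so `μ {x} > 0`. By ergodicity the orbit of `x` then has full measure, and the
weights along the orbit are nondecreasing by invariance, hence equal by periodicity.
-/

open Filter Function Metric Topology

section Contraction

variable {α : Type*} [MetricSpace α]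

theorem exists_fixedPoint_tendsto_of_dist_iterate_le [CompleteSpace α] {g : α → α}
    (hg : Continuous g) {p : α} {r K a : ℝ} (ha₀ : 0 ≤ a) (ha₁ : a < 1)
    (hp : dist p (g p) ≤ r)
    (hcontr : ∀ q, dist p q ≤ r → ∀ k, dist (g^[k] p) (g^[k] q) ≤ K * a ^ k) :
    ∃ x, g x = x ∧ ∀ q, dist p q ≤ r → Tendsto (fun k ↦ g^[k] q) atTop (𝓝 x) := by
  have hcauchy : CauchySeq fun k ↦ g^[k] p := by
    refine cauchySeq_of_le_geometric a K ha₁ fun k ↦ ?_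
    simpa only [iterate_succ_apply] using hcontr (g p) hp k
  obtain ⟨x, hx⟩ := cauchySeq_tendsto_of_complete hcauchy
  have hbasin : ∀ q, dist p q ≤ r → Tendsto (fun k ↦ g^[k] q) atTop (𝓝 x) := by
    refine fun q hq ↦ hx.congr_dist (squeeze_zero (fun _ ↦ dist_nonneg) (hcontr q hq) ?_)
    simpa using (tendsto_pow_atTop_nhds_zero_of_lt_one ha₀ ha₁).const_mul K
  refine ⟨x, tendsto_nhds_unique ?_ (hbasin (g p) hp), hbasin⟩
  exact ((hg.tendsto x).comp hx).congr fun k ↦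
    (iterate_succ_apply' g k p).symm.trans (iterate_succ_apply g k p)

end Contraction

namespace MeasureTheory.MeasurePreserving

variable {α : Type*} [MeasurableSpace α] {μ : Measure α} {g : α → α}

theorem measure_setOf_eventually_mem_le (hg : MeasurePreserving g μ μ) {U : Set α}
    (hU : MeasurableSet U) : μ {q | ∀ᶠ k in atTop, g^[k] q ∈ U} ≤ μ U := by
  have hunion : {q | ∀ᶠ k in atTop, g^[k] q ∈ U} = ⋃ N, ⋂ k ≥ N, g^[k] ⁻¹' U := by
    ext q
    simp [eventually_atTop]
  have hmono : Monotone fun N ↦ ⋂ k ≥ N, g^[k] ⁻¹' U := fun N N' hN ↦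
    biInter_subset_biInter_left fun _ hk ↦ hN.trans hk
  rw [hunion, hmono.measure_iUnion]
  refine iSup_le fun N ↦ ?_
  calc μ (⋂ k ≥ N, g^[k] ⁻¹' U) ≤ μ (g^[N] ⁻¹' U) := measure_mono (iInter₂_subset N le_rfl)
    _ = μ U := (hg.iterate N).measure_preimage hU.nullMeasurableSet

theorem measure_setOf_tendsto_le_measure_singleton [MetricSpace α] [OpensMeasurableSpace α]
    [IsFiniteMeasure μ] (hg : MeasurePreserving g μ μ) (x : α) :
    μ {q | Tendsto (fun k ↦ g^[k] q) atTop (𝓝 x)} ≤ μ {x} := by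
  have hball (r : ℝ) (hr : 0 < r) :
      μ {q | Tendsto (fun k ↦ g^[k] q) atTop (𝓝 x)} ≤ μ (cthickening r {x}) := by
    rw [cthickening_singleton x hr.le]
    refine (measure_mono fun q (hq : Tendsto _ _ _) ↦ ?_).trans
      (hg.measure_setOf_eventually_mem_le isClosed_closedBall.measurableSet)
    exact hq.eventually_mem (closedBall_mem_nhds x hr)
  have hlim := (tendsto_measure_cthickening_of_isClosed (μ := μ) ⟨1, one_pos, measure_ne_top μ _⟩
    (isClosed_singleton (x := x))).mono_left (nhdsWithin_le_nhds (s := Ioi 0))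
  exact ge_of_tendsto hlim (eventually_nhdsWithin_of_forall hball)

end MeasureTheory.MeasurePreserving

section PeriodicOrbit

variable {α : Type*} [MeasurableSpace α] [MeasurableSingletonClass α] {μ : Measure α}
  {f : α → α} {n : ℕ} {x : α}

theorem Ergodic.measure_setOf_iterate_eq_one_of_isPeriodicPt [IsProbabilityMeasure μ]
    (hf : Ergodic f μ) (hx : IsPeriodicPt f n x) (hn : 0 < n) (hμx : μ {x} ≠ 0) :
    μ {q | ∃ i < n, q = f^[i] x} = 1 := by
  set O := {q | ∃ i < n, q = f^[i] x}
  have hOfin : O.Finite := ((finite_lt_nat n).image fun i ↦ f^[i] x).subset <| by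
    rintro _ ⟨i, hi, rfl⟩
    exact ⟨i, hi, rfl⟩
  have hxO : {x} ⊆ O := singleton_subset_iff.2 ⟨0, hn, rfl⟩
  have hOpre : O ⊆ f ⁻¹' O := by
    rintro _ ⟨i, -, rfl⟩
    exact ⟨(i + 1) % n, Nat.mod_lt _ hn, by rw [hx.iterate_mod_apply, iterate_succ_apply']⟩
  rcases hf.ae_empty_or_univ_of_ae_le_preimage hOfin.measurableSet.nullMeasurableSet
    hOpre.eventuallyLE with h | h
  · exact absurd (measure_mono_null hxO (by rw [measure_congr h, measure_empty])) hμx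
  · rw [measure_congr h, measure_univ]

theorem MeasureTheory.MeasurePreserving.measure_singleton_iterate_of_isPeriodicPt
    (hf : MeasurePreserving f μ μ) (hx : IsPeriodicPt f n x) (hn : 0 < n) (i : ℕ) :
    μ {f^[i] x} = μ {x} := by
  have hstep : ∀ y, μ {y} ≤ μ {f y} := fun y ↦
    (measure_mono (singleton_subset_iff.2 rfl : {y} ⊆ f ⁻¹' {f y})).trans_eq
      (hf.measure_preimage (measurableSet_singleton _).nullMeasurableSet)
  have hmono : Monotone fun i ↦ μ {f^[i] x} := monotone_nat_of_le_succ fun i ↦ by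
    simpa only [iterate_succ_apply'] using hstep (f^[i] x)
  refine le_antisymm ?_ (hmono (Nat.zero_le i))
  calc μ {f^[i] x} ≤ μ {f^[i * n] x} := hmono (Nat.le_mul_of_pos_right i hn)
    _ = μ {x} := by rw [(hx.const_mul i).eq]

theorem MeasureTheory.MeasurePreserving.measure_setOf_iterate_lt_minimalPeriod
    (hf : MeasurePreserving f μ μ) (x : α) :
    μ {q | ∃ i < minimalPeriod f x, q = f^[i] x} = minimalPeriod f x * μ {x} := by
  classical
  have hO : {q | ∃ i < minimalPeriod f x, q = f^[i] x} =
      ↑((Finset.range (minimalPeriod f x)).image fun i ↦ f^[i] x) := by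
    ext q
    simp [eq_comm]
  rw [hO, ← sum_measure_singleton, Finset.sum_image fun i hi j hj ↦
    iterate_injOn_Iio_minimalPeriod (Finset.mem_range.1 hi) (Finset.mem_range.1 hj)]
  rw [Finset.sum_congr rfl fun i hi ↦ hf.measure_singleton_iterate_of_isPeriodicPt
    (isPeriodicPt_minimalPeriod f x) (Nat.zero_lt_of_lt (Finset.mem_range.1 hi)) i]
  simp

end PeriodicOrbit

theorem ergodic_contracting_measure_on_periodic_orbit_general
    {M : Type*} [MetricSpace M] [CompactSpace M] [MeasurableSpace M] [BorelSpace M]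
    (f : M → M) (hcont : Continuous f)
    (μ : Measure M) [IsProbabilityMeasure μ]
    (herg : Ergodic f μ)
    (Λ : Set M) (hΛmeas : MeasurableSet Λ)
    (R C c : ℝ) (hR : 0 < R) (hC : 0 < C) (hc0 : 0 < c) (hc1 : c < 1)
    (hΛμ : 1 / 2 < μ Λ)
    (hcontr : ∀ p ∈ Λ, ∀ q : M, dist p q ≤ R → ∀ m : ℕ,
      dist (f^[m] p) (f^[m] q) ≤ C * c ^ m * dist p q) :
    ∃ (p : M) (n : ℕ), 1 ≤ n ∧ f^[n] p = p ∧
      μ {q : M | ∃ i < n, q = f^[i] p} = 1 ∧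
      ∀ i < n, μ {f^[i] p} = (n : ℝ≥0∞)⁻¹ := by
  have hf := herg.toMeasurePreserving
  obtain ⟨z, -, hz⟩ := exists_mem_forall_mem_nhdsWithin_pos_measure (zero_le.trans_lt hΛμ).ne'
  set s := Λ ∩ ball z (R / 2)
  have hs : 0 < μ s := hz s (inter_mem_nhdsWithin Λ (ball_mem_nhds z (half_pos hR)))
  have hsR : ∀ p ∈ s, ∀ q ∈ s, dist p q ≤ R := fun p hp q hq ↦
    (dist_triangle_right p q z).trans (by linarith [mem_ball.1 hp.2, mem_ball.1 hq.2])
  obtain ⟨p, hps, n, hn, hnp⟩ := hf.conservative.exists_mem_iterate_mem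
    (hΛmeas.inter measurableSet_ball).nullMeasurableSet hs.ne'
  obtain ⟨x, hx, hbasin⟩ := exists_fixedPoint_tendsto_of_dist_iterate_le (K := C * R)
    (hcont.iterate n) (pow_nonneg hc0.le n) (pow_lt_one₀ hc0.le hc1 hn) (hsR p hps _ hnp)
    fun q hq k ↦ by
      rw [← iterate_mul, ← pow_mul]
      calc dist (f^[n * k] p) (f^[n * k] q) ≤ C * c ^ (n * k) * dist p q :=
            hcontr p hps.1 q hq (n * k)
        _ ≤ C * c ^ (n * k) * R := by gcongr
        _ = C * R * c ^ (n * k) := by ring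
  have hμx : μ s ≤ μ {x} := (measure_mono fun q hq ↦ hbasin q (hsR p hps q hq)).trans
    ((hf.iterate n).measure_setOf_tendsto_le_measure_singleton x)
  have hper := isPeriodicPt_minimalPeriod f x
  have hm : 0 < minimalPeriod f x := IsPeriodicPt.minimalPeriod_pos (Nat.pos_of_ne_zero hn) hx
  have hO := herg.measure_setOf_iterate_eq_one_of_isPeriodicPt hper hm (hs.trans_le hμx).ne'
  refine ⟨x, minimalPeriod f x, hm, hper, hO, fun i _ ↦ ?_⟩
  rw [hf.measure_singleton_iterate_of_isPeriodicPt hper hm]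
  refine ENNReal.eq_inv_of_mul_eq_one_left ?_
  rw [mul_comm, ← hf.measure_setOf_iterate_lt_minimalPeriod, hO]

/-- **Corollary to Theorem II (contraction-hypothesis form).** An ergodic invariant measure
for a homeomorphism of a compact metric space which contracts exponentially near a set of
measure `> 1/2` is concentrated on a single periodic orbit, with equal weights `1/n`. -/
theorem ergodic_contracting_measure_on_periodic_orbit
    {M : Type*} [MetricSpace M] [CompactSpace M] [MeasurableSpace M] [BorelSpace M]
    (f : M → M) (hcont : Continuous f) (hbij : Function.Bijective f)
    (μ : Measure M) [IsProbabilityMeasure μ]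
    (hinv : MeasurePreserving f μ μ) (herg : Ergodic f μ)
    (Λ : Set M) (hΛmeas : MeasurableSet Λ)
    (R C c : ℝ) (hR : 0 < R) (hC : 0 < C) (hc0 : 0 < c) (hc1 : c < 1)
    (hΛμ : 1 / 2 < μ Λ)
    (hcontr : ∀ p ∈ Λ, ∀ q : M, dist p q ≤ R → ∀ m : ℕ,
      dist (f^[m] p) (f^[m] q) ≤ C * c ^ m * dist p q) :
    ∃ (p : M) (n : ℕ), 1 ≤ n ∧ f^[n] p = p ∧
      μ {q : M | ∃ i < n, q = f^[i] p} = 1 ∧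
      ∀ i < n, μ {f^[i] p} = (n : ℝ≥0∞)⁻¹ :=
  ergodic_contracting_measure_on_periodic_orbit_general f hcont μ herg Λ hΛmeas R C c hR hC hc0 hc1
    hΛμ hcontr
end

section
/- Let (X,ν) be a standard Borel probability space, f: X → X an invertible measure-preserving ergodic transformation, M a compact metric space, and φ: X → Homeo(M) measurable; let F(x,p) = (f(x), φ_x(p)) be the skew product on X×M, and let μ be an F-invariant ergodic Borel probability measure on X×M whose projection to X is ν, with fiberwise disintegration {μ_x}. Assume that for ν-a.e. x, (φ_x)_*μ_x = μ_{f(x)}. If the set B = {x ∈ X : μ_x has an atom, i.e. ∃p ∈ M with μ_x({p}) > 0} satisfies ν(B) > 0, then there exist an integer k ≥ 1 and a measurable set S ⊆ X×M with μ(S) = 1 such that for every (x,p) ∈ S, the fiber S_x = {q ∈ M : (x,q) ∈ S} has exactly k elements and μ_x({q}) = 1/k for every q ∈ S_x. -/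
open MeasureTheory Set ProbabilityTheory
open scoped ENNReal

/-!
The mass `μ_x {p}` of the atom at `(x, p)` is invariant under the skew product, because `φ_x`
is injective and pushes `μ_x` to `μ_{f x}`. By ergodicity it is a.e. equal to a constant `c`,
and `c > 0` since atoms exist over a set of positive measure. Hence a.e. fiber measure gives
full mass to its atoms of mass exactly `c`; a probability measure can only do that if there
are finitely many of them, say `k`, and `c = 1 / k`.

Since `x ↦ μ_x` need not be measurable, it is first replaced by the conditional kernel
`μ.condKernel`, which agrees with it a.e. by uniqueness of disintegrations.
-/

theorem countable_generatePiSystem {α : Type*} {S : Set (Set α)} (hS : S.Countable) :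
    (generatePiSystem S).Countable := by
  refine ((countable_ofPred_finite_subset hS).image fun T => ⋂₀ T).mono fun s hs => ?_
  induction hs with
  | base h => exact ⟨{_}, ⟨finite_singleton _, singleton_subset_iff.2 h⟩, sInter_singleton _⟩
  | inter _ _ _ ihs iht =>
    obtain ⟨T₁, ⟨hT₁, hT₁S⟩, rfl⟩ := ihs
    obtain ⟨T₂, ⟨hT₂, hT₂S⟩, rfl⟩ := iht
    exact ⟨T₁ ∪ T₂, ⟨hT₁.union hT₂, union_subset hT₁S hT₂S⟩, sInter_union T₁ T₂⟩

/-- `∫⁻` of a non-measurable function is its lower integral, so `h_sum` says that the lower and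
upper integrals of `h` coincide. -/
theorem aemeasurable_of_lintegral_add_lintegral_one_sub_eq {α : Type*} [MeasurableSpace α]
    {ν : Measure α} [IsFiniteMeasure ν] {h : α → ℝ≥0∞} (h_le : ∀ x, h x ≤ 1)
    (h_sum : ∫⁻ x, h x ∂ν + ∫⁻ x, (1 - h x) ∂ν = ν univ) : AEMeasurable h ν := by
  obtain ⟨ψ, hψm, hψh, hψ⟩ := exists_measurable_le_lintegral_eq ν h
  obtain ⟨ψ', hψ'm, hψ'h, hψ'⟩ := exists_measurable_le_lintegral_eq ν fun x => 1 - h x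
  have hψ'_le : ∀ x, ψ' x ≤ 1 := fun x => (hψ'h x).trans tsub_le_self
  have h_le_sub : ∀ x, h x ≤ 1 - ψ' x := fun x =>
    ENNReal.le_sub_of_add_le_left (ne_top_of_le_ne_top ENNReal.one_ne_top (hψ'_le x))
      ((add_le_add_left (hψ'h x) (h x)).trans (tsub_add_cancel_of_le (h_le x)).le)
  have hψ'_ne_top : ∫⁻ x, ψ' x ∂ν ≠ ∞ :=
    ne_top_of_le_ne_top (measure_ne_top ν univ) (hψ' ▸ h_sum ▸ le_add_self)
  have hψ_ne_top : ∫⁻ x, ψ x ∂ν ≠ ∞ :=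
    ne_top_of_le_ne_top (measure_ne_top ν univ) (hψ ▸ h_sum ▸ le_self_add)
  have h_int : ∫⁻ x, (1 - ψ' x) ∂ν ≤ ∫⁻ x, ψ x ∂ν := by
    rw [lintegral_sub' hψ'm.aemeasurable hψ'_ne_top (ae_of_all _ hψ'_le), lintegral_const,
      one_mul, ← h_sum, hψ', ← hψ, ENNReal.add_sub_cancel_right (hψ' ▸ hψ'_ne_top)]
  have hψ_eq : ψ =ᵐ[ν] fun x => 1 - ψ' x :=
    ae_eq_of_ae_le_of_lintegral_le (ae_of_all _ fun x => (hψh x).trans (h_le_sub x))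
      hψ_ne_top (measurable_const.sub hψ'm).aemeasurable h_int
  exact ⟨ψ, hψm, hψ_eq.mono fun x hx => le_antisymm (hx ▸ h_le_sub x) (hψh x)⟩

theorem Filter.Eventually.of_measure_singleton_ne_zero {α : Type*} [MeasurableSpace α]
    {ρ : Measure α} {P : α → Prop} (h : ∀ᵐ a ∂ρ, P a) {a : α} (ha : ρ {a} ≠ 0) : P a := by
  by_contra hPa
  exact ha (measure_mono_null (singleton_subset_iff.2 hPa) (ae_iff.1 h))

namespace MeasureTheory.Measure

variable {X M : Type*} [MeasurableSpace X] [MeasurableSpace M]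

section Disintegration

variable [StandardBorelSpace M] [Nonempty M] (ρ : Measure (X × M)) [IsFiniteMeasure ρ]

theorem ae_apply_eq_condKernel_apply_of_measure_eq_lintegral
    (μx : X → Measure M) [∀ x, IsProbabilityMeasure (μx x)]
    (hdisint : ∀ E : Set (X × M), MeasurableSet E →
      ρ E = ∫⁻ x, μx x {p | (x, p) ∈ E} ∂ρ.fst)
    {A : Set M} (hA : MeasurableSet A) :
    ∀ᵐ x ∂ρ.fst, μx x A = ρ.condKernel x A := by
  have h_prod : ∀ s, MeasurableSet s → ∀ A, MeasurableSet A →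
      ∫⁻ x in s, μx x A ∂ρ.fst = ρ (s ×ˢ A) := by
    intro s hs A hA
    rw [hdisint _ (hs.prod hA), ← lintegral_indicator hs]
    congr with x
    by_cases hx : x ∈ s <;> simp [hx]
  have h_univ : ∀ A, MeasurableSet A → ∫⁻ x, μx x A ∂ρ.fst = ρ (univ ×ˢ A) := fun A hA => by
    rw [← h_prod univ .univ A hA, setLIntegral_univ]
  have h_meas : AEMeasurable (fun x => μx x A) ρ.fst := by
    refine aemeasurable_of_lintegral_add_lintegral_one_sub_eq (fun x => prob_le_one) ?_
    simp_rw [← prob_compl_eq_one_sub hA, h_univ A hA, h_univ Aᶜ hA.compl, univ_prod,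
      preimage_compl, measure_add_measure_compl (measurable_snd hA), fst_univ]
  refine ae_eq_of_forall_setLIntegral_eq_of_sigmaFinite₀ h_meas
    (ρ.condKernel.measurable_coe hA).aemeasurable fun s hs _ => ?_
  rw [h_prod s hs A hA, setLIntegral_condKernel_eq_measure_prod hs hA]

theorem ae_eq_condKernel_of_measure_eq_lintegral
    (μx : X → Measure M) [∀ x, IsProbabilityMeasure (μx x)]
    (hdisint : ∀ E : Set (X × M), MeasurableSet E →
      ρ E = ∫⁻ x, μx x {p | (x, p) ∈ E} ∂ρ.fst) :
    ∀ᵐ x ∂ρ.fst, μx x = ρ.condKernel x := by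
  set C := generatePiSystem (MeasurableSpace.countableGeneratingSet M)
  have hC : ∀ᵐ x ∂ρ.fst, ∀ A ∈ C, μx x A = ρ.condKernel x A :=
    (ae_ball_iff (countable_generatePiSystem MeasurableSpace.countable_countableGeneratingSet)).2
      fun A hA => ρ.ae_apply_eq_condKernel_apply_of_measure_eq_lintegral μx hdisint <|
        generatePiSystem_measurableSet
          (fun _ hs => MeasurableSpace.measurableSet_countableGeneratingSet hs) A hA
  filter_upwards [hC] with x hx
  refine ext_of_generate_finite C ?_ (isPiSystem_generatePiSystem _) hx (by simp)
  rw [generateFrom_generatePiSystem_eq, MeasurableSpace.generateFrom_countableGeneratingSet]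

theorem ae_ae_condKernel_of_ae {P : X × M → Prop} (h : ∀ᵐ z ∂ρ, P z) :
    ∀ᵐ x ∂ρ.fst, ∀ᵐ p ∂ρ.condKernel x, P (x, p) := by
  rw [← ρ.disintegrate ρ.condKernel] at h
  exact ae_ae_of_ae_compProd h

end Disintegration

section Atoms

variable [MeasurableSingletonClass M] (ρ : Measure M) [IsProbabilityMeasure ρ]

theorem exists_encard_eq_of_ae_measure_singleton_eq {c : ℝ≥0∞} (hc : c ≠ 0)
    (h : ∀ᵐ p ∂ρ, ρ {p} = c) :
    ∃ n : ℕ, 1 ≤ n ∧ {p | ρ {p} = c}.encard = n ∧ c = (n : ℝ≥0∞)⁻¹ := by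
  set D := {p | ρ {p} = c}
  have hD : D.Finite :=
    (finite_const_le_meas_of_disjoint_iUnion ρ (pos_iff_ne_zero.2 hc) measurableSet_singleton
      (fun p q hpq => disjoint_singleton.2 hpq) (measure_ne_top ρ _)).subset fun p hp => hp.ge
  have h_card : (hD.toFinset.card : ℝ≥0∞) * c = 1 :=
    calc (hD.toFinset.card : ℝ≥0∞) * c = ∑ p ∈ hD.toFinset, ρ {p} := by
          rw [Finset.sum_congr rfl fun p hp => hD.mem_toFinset.1 hp, Finset.sum_const,
            nsmul_eq_mul]
      _ = ρ D := by rw [sum_measure_singleton, hD.coe_toFinset]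
      _ = 1 := (prob_compl_eq_zero_iff hD.measurableSet).1 (ae_iff.1 h)
  refine ⟨hD.toFinset.card, ?_, hD.encard_eq_coe_toFinset_card, ?_⟩
  · exact Nat.one_le_iff_ne_zero.2 fun h0 => by simp [h0] at h_card
  · rw [← ENNReal.eq_inv_of_mul_eq_one_left (by rwa [mul_comm] at h_card)]

theorem encard_setOf_measure_singleton_eq_natCast_inv {k : ℕ}
    (h : ∀ᵐ p ∂ρ, ρ {p} = (k : ℝ≥0∞)⁻¹) : {p | ρ {p} = (k : ℝ≥0∞)⁻¹}.encard = k := by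
  obtain ⟨n, -, hn, hkn⟩ := ρ.exists_encard_eq_of_ae_measure_singleton_eq
    (ENNReal.inv_ne_zero.2 (ENNReal.natCast_ne_top k)) h
  rw [hn, Nat.cast_inj.1 (inv_inj.1 hkn).symm]

end Atoms

end MeasureTheory.Measure

theorem ProbabilityTheory.Kernel.measurable_apply_singleton {X M : Type*} [MeasurableSpace X]
    [MeasurableSpace M] [MeasurableEq M] (κ : Kernel X M) [IsSFiniteKernel κ] :
    Measurable fun z : X × M => κ z.1 {z.2} := by
  have h_diag : MeasurableSet {w : (X × M) × M | w.1.2 = w.2} :=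
    measurableSet_eq_fun (measurable_snd.comp measurable_fst) measurable_snd
  have h_fiber (z : X × M) : Prod.mk z ⁻¹' {w : (X × M) × M | w.1.2 = w.2} = {z.2} := by
    ext q
    simp [eq_comm]
  simpa [h_fiber] using
    Kernel.measurable_kernel_prodMk_left (κ := κ.comap Prod.fst measurable_fst) h_diag

theorem exists_ae_condKernel_singleton_eq_of_quasiErgodic {X M : Type*} [MeasurableSpace X]
    [MeasurableSpace M] [StandardBorelSpace M] [Nonempty M] {μ : Measure (X × M)}
    [IsFiniteMeasure μ] {f : X → X} {φ : X → M → M} (hφ : ∀ x, Measurable (φ x))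
    (hφinj : ∀ x, Function.Injective (φ x))
    (hF : QuasiErgodic (fun z : X × M => (f z.1, φ z.1 z.2)) μ)
    (hequiv : ∀ᵐ x ∂μ.fst, μ.condKernel (f x) = (μ.condKernel x).map (φ x)) :
    ∃ c, ∀ᵐ z ∂μ, μ.condKernel z.1 {z.2} = c := by
  have h_inv : (fun z : X × M => μ.condKernel z.1 {z.2}) ∘ (fun z => (f z.1, φ z.1 z.2))
      =ᵐ[μ] fun z => μ.condKernel z.1 {z.2} := by
    filter_upwards [ae_of_ae_map measurable_fst.aemeasurable hequiv] with z hz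
    show μ.condKernel (f z.1) {φ z.1 z.2} = _
    rw [hz, Measure.map_apply (hφ _) (measurableSet_singleton _),
      ← image_singleton, (hφinj _).preimage_image]
  exact hF.ae_eq_const_of_ae_eq_comp₀
    μ.condKernel.measurable_apply_singleton.nullMeasurable h_inv

theorem theoremII_reduction_atoms_general
    {X : Type*} [MeasurableSpace X]
    (ν : Measure X)
    (f : X → X) (hf : MeasurePreserving f ν ν)
    {M : Type*} [MetricSpace M] [CompactSpace M] [MeasurableSpace M] [BorelSpace M]
    (φ : X → M → M)
    (hφcont : ∀ x, Continuous (φ x)) (hφbij : ∀ x, Function.Bijective (φ x))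
    (μ : Measure (X × M)) [IsProbabilityMeasure μ]
    (hFerg : Ergodic (fun z : X × M => (f z.1, φ z.1 z.2)) μ)
    (hproj : μ.map Prod.fst = ν)
    (μx : X → Measure M) (hμxprob : ∀ x, IsProbabilityMeasure (μx x))
    (hdisint : ∀ E : Set (X × M), MeasurableSet E →
      μ E = ∫⁻ x, μx x {p | (x, p) ∈ E} ∂ν)
    (hequiv : ∀ᵐ x ∂ν, (μx x).map (φ x) = μx (f x))
    (hB : 0 < ν {x : X | ∃ p : M, 0 < μx x {p}}) :
    ∃ (k : ℕ) (S : Set (X × M)), 1 ≤ k ∧ MeasurableSet S ∧ μ S = 1 ∧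
      ∀ z ∈ S, {q : M | (z.1, q) ∈ S}.encard = k ∧
        ∀ q : M, (z.1, q) ∈ S → μx z.1 {q} = (k : ℝ≥0∞)⁻¹ := by
  subst hproj
  obtain ⟨-, p₀, -⟩ := nonempty_of_measure_ne_zero hB.ne'
  have : Nonempty M := ⟨p₀⟩
  set κ := μ.condKernel
  have hμx : ∀ᵐ x ∂μ.fst, μx x = κ x := μ.ae_eq_condKernel_of_measure_eq_lintegral μx hdisint
  have hκ_equiv : ∀ᵐ x ∂μ.fst, κ (f x) = (κ x).map (φ x) := by
    filter_upwards [hμx, hf.quasiMeasurePreserving.ae hμx, hequiv] with x hx hfx hφx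
    rw [← hx, ← hfx, hφx]
  obtain ⟨c, hc⟩ := exists_ae_condKernel_singleton_eq_of_quasiErgodic
    (fun x => (hφcont x).measurable) (fun x => (hφbij x).injective) hFerg.quasiErgodic hκ_equiv
  have hfib : ∀ᵐ x ∂μ.fst, μx x = κ x ∧ ∀ᵐ p ∂κ x, κ x {p} = c :=
    hμx.and (μ.ae_ae_condKernel_of_ae hc)
  have hc0 : c ≠ 0 := by
    obtain ⟨x, ⟨p, hp⟩, hx, hxc⟩ := ((frequently_ae_mem_iff.2 hB.ne').and_eventually hfib).exists
    have hp' : κ x {p} ≠ 0 := (hx ▸ hp).ne'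
    exact hxc.of_measure_singleton_ne_zero hp' ▸ hp'
  obtain ⟨G, hGae, hGm, hG⟩ := hfib.exists_measurable_mem
  obtain ⟨x₀, hx₀⟩ := Filter.nonempty_of_mem hGae
  obtain ⟨k, hk, -, rfl⟩ := (κ x₀).exists_encard_eq_of_ae_measure_singleton_eq hc0 (hG x₀ hx₀).2
  have hSm : MeasurableSet {z : X × M | z.1 ∈ G ∧ κ z.1 {z.2} = (k : ℝ≥0∞)⁻¹} :=
    (measurable_fst hGm).inter (κ.measurable_apply_singleton (measurableSet_singleton _))
  refine ⟨k, _, hk, hSm, ?_, fun z hz => ⟨?_, fun q hq => (hG z.1 hz.1).1 ▸ hq.2⟩⟩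
  · rw [← measure_univ (μ := μ), ← ae_mem_iff_measure_eq hSm.nullMeasurableSet]
    filter_upwards [ae_of_ae_map measurable_fst.aemeasurable hGae, hc] with z hzG hzc
    exact ⟨hzG, hzc⟩
  · simpa [hz.1] using (κ z.1).encard_setOf_measure_singleton_eq_natCast_inv (hG z.1 hz.1).2

/-- **Reduction step in Theorem II.** For a skew product over an invertible ergodic base
with an invariant ergodic measure: if the fiber measures have atoms over a positive-measure
set of base points, then there is a full-measure set meeting a.e. fiber in exactly `k`
points, each of which is an atom of weight `1/k`. -/
theorem theoremII_reduction_atoms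
    {X : Type*} [MeasurableSpace X] [StandardBorelSpace X]
    (ν : Measure X) [IsProbabilityMeasure ν]
    (f : X → X) (hf : MeasurePreserving f ν ν) (hfbij : Function.Bijective f)
    (hferg : Ergodic f ν)
    {M : Type*} [MetricSpace M] [CompactSpace M] [MeasurableSpace M] [BorelSpace M]
    (φ : X → M → M)
    (hφcont : ∀ x, Continuous (φ x)) (hφbij : ∀ x, Function.Bijective (φ x))
    (hφmeas : Measurable fun z : X × M => φ z.1 z.2)
    (μ : Measure (X × M)) [IsProbabilityMeasure μ]
    (hFinv : MeasurePreserving (fun z : X × M => (f z.1, φ z.1 z.2)) μ μ)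
    (hFerg : Ergodic (fun z : X × M => (f z.1, φ z.1 z.2)) μ)
    (hproj : μ.map Prod.fst = ν)
    (μx : X → Measure M) (hμxprob : ∀ x, IsProbabilityMeasure (μx x))
    (hdisint : ∀ E : Set (X × M), MeasurableSet E →
      μ E = ∫⁻ x, μx x {p | (x, p) ∈ E} ∂ν)
    (hequiv : ∀ᵐ x ∂ν, (μx x).map (φ x) = μx (f x))
    (hB : 0 < ν {x : X | ∃ p : M, 0 < μx x {p}}) :
    ∃ (k : ℕ) (S : Set (X × M)), 1 ≤ k ∧ MeasurableSet S ∧ μ S = 1 ∧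
      ∀ z ∈ S, {q : M | (z.1, q) ∈ S}.encard = k ∧
        ∀ q : M, (z.1, q) ∈ S → μx z.1 {q} = (k : ℝ≥0∞)⁻¹ :=
  theoremII_reduction_atoms_general ν f hf φ hφcont hφbij μ hFerg hproj μx hμxprob hdisint hequiv hB
end

section
/- Let M be a compact metric space, μ a Borel probability measure on M, and N a positive integer. Suppose that for every ε > 0 there exist closed balls U_1, …, U_m in M with m ≤ N, ∑_{j=1}^m diam(U_j) < ε, and μ(U_1 ∪ ⋯ ∪ U_m) ≥ 1/2. Then μ has an atom of mass at least 1/(2N): there exists p ∈ M with μ({p}) ≥ 1/(2N). -/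
open MeasureTheory Set
open scoped ENNReal

/-- **Atom production from efficient covers.** If a Borel probability measure `μ` on a
compact metric space is such that, for every `ε > 0`, at most `N` closed balls of total
diameter less than `ε` carry `μ`-mass at least `1/2`, then `μ` has an atom of mass at least
`1/(2N)`. -/
theorem atom_of_small_covers
    {M : Type*} [MetricSpace M] [CompactSpace M] [MeasurableSpace M] [BorelSpace M]
    (μ : Measure M) [IsProbabilityMeasure μ] (N : ℕ) (hN : 0 < N)
    (hcov : ∀ ε : ℝ, 0 < ε → ∃ (m : ℕ) (x : Fin m → M) (r : Fin m → ℝ), m ≤ N ∧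
      (∑ j : Fin m, Metric.diam (Metric.closedBall (x j) (r j))) < ε ∧
      1 / 2 ≤ μ (⋃ j : Fin m, Metric.closedBall (x j) (r j))) :
    ∃ p : M, (2 * (N : ℝ≥0∞))⁻¹ ≤ μ {p} := by
  have hNne : (N : ℝ≥0∞) ≠ 0 := by exact_mod_cast hN.ne'
  have hNtop : (N : ℝ≥0∞) ≠ ∞ := ENNReal.natCast_ne_top N
  -- Step 1: for each n, a ball of small diameter carrying mass ≥ (2N)⁻¹
  have key : ∀ n : ℕ, ∃ c : M, ∃ r : ℝ,
      Metric.diam (Metric.closedBall c r) < 1/(n+1) ∧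
      (2 * (N : ℝ≥0∞))⁻¹ ≤ μ (Metric.closedBall c r) := by
    intro n
    obtain ⟨m, x, r, hmN, hsum, hmeas⟩ := hcov (1/(n+1)) (by positivity)
    have hm0 : 0 < m := by
      rcases Nat.eq_zero_or_pos m with h | h
      · subst h
        simp at hmeas
      · exact h
    haveI : Nonempty (Fin m) := Fin.pos_iff_nonempty.mp hm0
    obtain ⟨j₀, hj₀⟩ := Finite.exists_max (fun j : Fin m => μ (Metric.closedBall (x j) (r j)))
    refine ⟨x j₀, r j₀, ?_, ?_⟩
    · exact lt_of_le_of_lt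
        (Finset.single_le_sum (f := fun j => Metric.diam (Metric.closedBall (x j) (r j))) (fun j _ => Metric.diam_nonneg) (Finset.mem_univ j₀)) hsum
    · have h1 : μ (⋃ j : Fin m, Metric.closedBall (x j) (r j))
          ≤ ∑ j : Fin m, μ (Metric.closedBall (x j) (r j)) := (measure_iUnion_le _).trans (le_of_eq (tsum_fintype _))
      have h2 : ∑ j : Fin m, μ (Metric.closedBall (x j) (r j))
          ≤ (m : ℝ≥0∞) * μ (Metric.closedBall (x j₀) (r j₀)) := by
        calc ∑ j : Fin m, μ (Metric.closedBall (x j) (r j))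
            ≤ ∑ _j : Fin m, μ (Metric.closedBall (x j₀) (r j₀)) :=
              Finset.sum_le_sum fun j _ => hj₀ j
          _ = (m : ℝ≥0∞) * μ (Metric.closedBall (x j₀) (r j₀)) := by
              simp [Finset.sum_const, mul_comm]
      have h3 : (2 : ℝ≥0∞)⁻¹ ≤ (N : ℝ≥0∞) * μ (Metric.closedBall (x j₀) (r j₀)) := by
        calc (2 : ℝ≥0∞)⁻¹ = 1/2 := by norm_num
          _ ≤ μ (⋃ j : Fin m, Metric.closedBall (x j) (r j)) := hmeas
          _ ≤ (m : ℝ≥0∞) * μ (Metric.closedBall (x j₀) (r j₀)) := h1.trans h2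
          _ ≤ (N : ℝ≥0∞) * μ (Metric.closedBall (x j₀) (r j₀)) :=
              mul_le_mul_left (by exact_mod_cast hmN) _
      have := mul_le_mul_right h3 ((N : ℝ≥0∞)⁻¹)
      rw [← mul_assoc, ENNReal.inv_mul_cancel hNne hNtop, one_mul] at this
      calc (2 * (N : ℝ≥0∞))⁻¹ = (N : ℝ≥0∞)⁻¹ * 2⁻¹ := by
            rw [ENNReal.mul_inv (Or.inl (by norm_num)) (Or.inl (by norm_num)), mul_comm]
        _ ≤ μ (Metric.closedBall (x j₀) (r j₀)) := this
  choose c r hd hm using key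
  -- centers lie in their balls
  have hcmem : ∀ n, c n ∈ Metric.closedBall (c n) (r n) := by
    intro n
    have hpos : 0 < μ (Metric.closedBall (c n) (r n)) :=
      lt_of_lt_of_le (ENNReal.inv_pos.mpr (ENNReal.mul_ne_top (by norm_num) hNtop)) (hm n)
    have hne : (Metric.closedBall (c n) (r n)).Nonempty :=
      nonempty_of_measure_ne_zero hpos.ne'
    exact Metric.mem_closedBall_self (Metric.nonempty_closedBall.mp hne)
  -- extract a convergent subsequence of the centers
  obtain ⟨p, -, φ, hφ, hconv⟩ := isCompact_univ.tendsto_subseq (fun n => mem_univ (c n))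
  refine ⟨p, ?_⟩
  -- each closed ball around p of positive radius has mass ≥ (2N)⁻¹
  have hball : ∀ δ : ℝ, 0 < δ → (2 * (N : ℝ≥0∞))⁻¹ ≤ μ (Metric.closedBall p δ) := by
    intro δ hδ
    obtain ⟨n, hn1, hn2⟩ : ∃ n : ℕ, dist (c (φ n)) p < δ/2 ∧ 1/((n:ℝ)+1) < δ/2 := by
      obtain ⟨K, hK⟩ := Metric.tendsto_atTop.mp hconv (δ/2) (by positivity)
      obtain ⟨n₀, hn₀⟩ := exists_nat_one_div_lt (show (0:ℝ) < δ/2 by positivity)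
      refine ⟨max K n₀, by simpa using hK _ (le_max_left _ _), lt_of_le_of_lt ?_ hn₀⟩
      have : (n₀:ℝ) + 1 ≤ (max K n₀ : ℕ) + 1 := by
        exact_mod_cast Nat.succ_le_succ (le_max_right K n₀)
      exact one_div_le_one_div_of_le (by positivity) this
    have hsub : Metric.closedBall (c (φ n)) (r (φ n)) ⊆ Metric.closedBall p δ := by
      intro y hy
      have hdy : dist y (c (φ n)) ≤ Metric.diam (Metric.closedBall (c (φ n)) (r (φ n))) :=
        Metric.dist_le_diam_of_mem Metric.isBounded_closedBall hy (hcmem (φ n))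
      have hdiam : Metric.diam (Metric.closedBall (c (φ n)) (r (φ n))) < δ/2 := by
        refine lt_of_lt_of_le (hd (φ n)) (le_trans ?_ hn2.le)
        have : (n:ℝ) + 1 ≤ (φ n : ℝ) + 1 := by exact_mod_cast Nat.succ_le_succ hφ.le_apply
        exact one_div_le_one_div_of_le (by positivity) this
      have : dist y p ≤ dist y (c (φ n)) + dist (c (φ n)) p := dist_triangle _ _ _
      have : dist y p ≤ δ := by linarith
      exact Metric.mem_closedBall.mpr this
    exact le_trans (hm (φ n)) (measure_mono hsub)
  -- {p} is the intersection of shrinking closed balls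
  have hsingleton : (⋂ n : ℕ, Metric.closedBall p (1/((n:ℝ)+1))) = {p} := by
    apply Subset.antisymm
    · intro y hy
      simp only [mem_iInter, Metric.mem_closedBall] at hy
      have : dist y p ≤ 0 := by
        by_contra h
        push_neg at h
        obtain ⟨n, hn⟩ := exists_nat_one_div_lt h
        exact absurd (hy n) (not_le.mpr hn)
      simp [le_antisymm this dist_nonneg, dist_eq_zero.mp (le_antisymm this dist_nonneg)]
    · intro y hy
      simp only [mem_singleton_iff] at hy
      subst hy
      exact mem_iInter.mpr fun n => Metric.mem_closedBall_self (by positivity)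
  have htend : Filter.Tendsto (fun n : ℕ => μ (Metric.closedBall p (1/((n:ℝ)+1))))
      Filter.atTop (nhds (μ (⋂ n : ℕ, Metric.closedBall p (1/((n:ℝ)+1))))) := by
    apply tendsto_measure_iInter_atTop
    · exact fun n => measurableSet_closedBall.nullMeasurableSet
    · intro a b hab
      apply Metric.closedBall_subset_closedBall
      have : (a:ℝ) + 1 ≤ (b:ℝ) + 1 := by exact_mod_cast Nat.succ_le_succ hab
      exact one_div_le_one_div_of_le (by positivity) this
    · exact ⟨0, measure_ne_top μ _⟩
  rw [hsingleton] at htend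
  exact ge_of_tendsto' htend (fun n => hball _ (by positivity))
end
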